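/- arXiv:2411.04911 — 2 statements merged into one kernel-verified Lean document; each statement's English description precedes it below -/
import Mathlib

section
/- Let W_λ and W_ω be unilateral weighted shifts on ℓ² with positive bounded weights (λ_n) and (ω_n), with formal moment sequences λ̂_n and ω̂_n. If there exists a bounded operator X on ℓ² with dense range such that X W_λ = W_ω X, then sup_{n≥0} ω̂_n / λ̂_n < ∞. -/
open scoped InnerProductSpace

set_option synthInstance.maxHeartbeats 800000
set_option maxHeartbeats 1000000

theorem dense_range_intertwiner_moment_bound {H : Type*} [NormedAddCommGroup H]
    [InnerProductSpace ℂ H] [CompleteSpace H] (e : HilbertBasis ℕ ℂ H)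
    (l ω : ℕ → ℝ) (hl : ∀ n, 0 < l n) (hω : ∀ n, 0 < ω n)
    (hlb : BddAbove (Set.range l)) (hωb : BddAbove (Set.range ω))
    (Wl Wo : H →L[ℂ] H)
    (hWl : ∀ n, Wl (e n) = (l n : ℂ) • e (n + 1))
    (hWo : ∀ n, Wo (e n) = (ω n : ℂ) • e (n + 1))
    (X : H →L[ℂ] H) (hX : DenseRange X) (hint : X ∘L Wl = Wo ∘L X) :
    BddAbove (Set.range fun n =>
      (∏ i ∈ Finset.range n, (ω i) ^ 2) / (∏ i ∈ Finset.range n, (l i) ^ 2)) := by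
  classical
  have horth := e.orthonormal
  have hnorm : ∀ n, ‖e n‖ = 1 := horth.1
  have hij : ∀ i j, (⟪e i, e j⟫_ℂ) = if i = j then 1 else 0 := by
    intro i j
    by_cases h : i = j
    · simp [h, inner_self_eq_norm_sq_to_K, hnorm]
    · simp [h, horth.2 h]
  have hdense : Dense ((Submodule.span ℂ (Set.range e) : Submodule ℂ H) : Set H) := by
    exact Submodule.dense_iff_topologicalClosure_eq_top.mpr e.dense_span
  have hext : ∀ (f g : H →L[ℂ] ℂ), (∀ n, f (e n) = g (e n)) → f = g := by
    intro f g h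
    refine ContinuousLinearMap.ext_on hdense ?_
    rintro x ⟨n, rfl⟩
    exact h n
  -- Lemma A : ⟪e (m+1), Wo y⟫ = ω m * ⟪e m, y⟫
  have hA : ∀ m (y : H), ⟪e (m+1), Wo y⟫_ℂ = (ω m : ℂ) * ⟪e m, y⟫_ℂ := by
    intro m y
    have : (innerSL ℂ (e (m+1))).comp Wo = (ω m : ℂ) • innerSL ℂ (e m) := by
      refine hext _ _ fun n => ?_
      simp only [ContinuousLinearMap.comp_apply, ContinuousLinearMap.smul_apply,
        innerSL_apply_apply, hWo n, inner_smul_right, hij]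
      by_cases h : m = n <;> simp [h]
    have := congrArg (fun f => f y) this
    simpa using this
  -- Lemma B : ⟪e 0, Wo y⟫ = 0
  have hB : ∀ (y : H), ⟪e 0, Wo y⟫_ℂ = 0 := by
    intro y
    have : (innerSL ℂ (e 0)).comp Wo = 0 := by
      refine hext _ _ fun n => ?_
      simp only [ContinuousLinearMap.comp_apply, innerSL_apply_apply,
        ContinuousLinearMap.zero_apply, hWo n, inner_smul_right]
      rw [hij 0 (n+1)]
      simp
    have := congrArg (fun f => f y) this
    simpa using this
  set c : ℕ → ℂ := fun n => ⟪e n, X (e n)⟫_ℂ with hc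
  have hstep : ∀ n, (l n : ℂ) * c (n+1) = (ω n : ℂ) * c n := by
    intro n
    have h1 : X (Wl (e n)) = Wo (X (e n)) := by
      have := congrArg (fun f => f (e n)) hint
      simpa using this
    rw [hWl n] at h1
    have := congrArg (fun y => ⟪e (n+1), y⟫_ℂ) h1
    simp only [map_smul, inner_smul_right, hA] at this
    exact this
  set r : ℕ → ℝ := fun n => ∏ i ∈ Finset.range n, (ω i / l i) with hr
  have hrpos : ∀ n, 0 < r n := fun n =>
    Finset.prod_pos fun i _ => div_pos (hω i) (hl i)
  have hcn : ∀ n, c n = (r n : ℂ) * c 0 := by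
    intro n
    induction n with
    | zero => simp [hr]
    | succ n ih =>
      have hln : (l n : ℂ) ≠ 0 := by exact_mod_cast (hl n).ne'
      have := hstep n
      rw [ih] at this
      have : c (n+1) = (ω n / l n : ℂ) * ((r n : ℂ) * c 0) := by
        field_simp at this ⊢
        linear_combination this
      rw [this, hr]
      push_cast [Finset.prod_range_succ]
      ring
  -- c 0 ≠ 0
  have hXe : ∀ n, ⟪e 0, X (e n)⟫_ℂ = if n = 0 then c 0 else 0 := by
    intro n
    match n with
    | 0 => simp [hc]
    | Nat.succ k =>
      have h1 : X (Wl (e k)) = Wo (X (e k)) := by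
        have := congrArg (fun f => f (e k)) hint
        simpa using this
      rw [hWl k] at h1
      have h2 := congrArg (fun y => ⟪e 0, y⟫_ℂ) h1
      simp only [map_smul, inner_smul_right, hB] at h2
      have hln : (l k : ℂ) ≠ 0 := by exact_mod_cast (hl k).ne'
      rw [if_neg (Nat.succ_ne_zero k)]
      exact (mul_eq_zero.mp h2).resolve_left hln
  have hc0 : c 0 ≠ 0 := by
    intro h0
    have hzero : (innerSL ℂ (e 0)).comp X = 0 := by
      refine hext _ _ fun n => ?_
      simp only [ContinuousLinearMap.comp_apply, innerSL_apply_apply, hXe n,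
        ContinuousLinearMap.zero_apply]
      split <;> simp [h0]
    have hall : ∀ w : H, ⟪e 0, w⟫_ℂ = 0 := by
      intro w
      refine hX.induction_on w ?_ ?_
      · exact isClosed_eq (continuous_const.inner continuous_id) continuous_const
      · intro a
        have := congrArg (fun f => f a) hzero
        simpa using this
    have := hall (e 0)
    rw [hij 0 0] at this
    simp at this
  -- bound
  have hbound : ∀ n, r n ≤ ‖X‖ / ‖c 0‖ := by
    intro n
    have h1 : ‖c n‖ ≤ ‖X‖ := by
      have ha := norm_inner_le_norm (𝕜 := ℂ) (e n) (X (e n))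
      have hb := X.le_opNorm (e n)
      rw [hnorm n] at ha hb
      simp only [one_mul, mul_one] at ha hb
      exact le_trans ha hb
    have h2 : ‖c n‖ = r n * ‖c 0‖ := by
      rw [hcn n, norm_mul, Complex.norm_real, Real.norm_of_nonneg (hrpos n).le]
    rw [le_div_iff₀ (norm_pos_iff.mpr hc0), ← h2]
    exact h1
  refine ⟨(‖X‖ / ‖c 0‖)^2, ?_⟩
  rintro x ⟨n, rfl⟩
  dsimp only
  have heq : (∏ i ∈ Finset.range n, (ω i) ^ 2) / (∏ i ∈ Finset.range n, (l i) ^ 2)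
      = (r n)^2 := by
    rw [hr]
    rw [← Finset.prod_pow, ← Finset.prod_div_distrib]
    congr 1
    ext i
    rw [div_pow]
  rw [heq]
  exact pow_le_pow_left₀ (hrpos n).le (hbound n) 2
end

section
/- Let W_λ and W_ω be unilateral weighted shifts on ℓ² with positive bounded weights and formal moment sequences λ̂_n, ω̂_n. If sup_{n≥0} ω̂_n/λ̂_n < ∞, then there exists a bounded injective operator X on ℓ² with dense range such that X W_λ = W_ω X (i.e., W_λ is a quasi-affine transform of W_ω). -/
open scoped ENNReal

theorem quasi_affine_of_moment_bound {H : Type*} [NormedAddCommGroup H]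
    [InnerProductSpace ℂ H] [CompleteSpace H] (e : HilbertBasis ℕ ℂ H)
    (l ω : ℕ → ℝ) (hl : ∀ n, 0 < l n) (hω : ∀ n, 0 < ω n)
    (hlb : BddAbove (Set.range l)) (hωb : BddAbove (Set.range ω))
    (Wl Wo : H →L[ℂ] H)
    (hWl : ∀ n, Wl (e n) = (l n : ℂ) • e (n + 1))
    (hWo : ∀ n, Wo (e n) = (ω n : ℂ) • e (n + 1))
    (hbd : BddAbove (Set.range fun n =>
      (∏ i ∈ Finset.range n, (ω i) ^ 2) / (∏ i ∈ Finset.range n, (l i) ^ 2))) :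
    ∃ X : H →L[ℂ] H, Function.Injective X ∧ DenseRange X ∧ X ∘L Wl = Wo ∘L X := by
  classical
  set c : ℕ → ℝ := fun n => ∏ i ∈ Finset.range n, (ω i / l i) with hc
  have hcpos : ∀ n, 0 < c n := fun n =>
    Finset.prod_pos fun i _ => div_pos (hω i) (hl i)
  obtain ⟨M, hM⟩ := hbd
  have hM' : ∀ n, (c n) ^ 2 ≤ M := by
    intro n
    have h1 : (c n) ^ 2 =
        (∏ i ∈ Finset.range n, (ω i) ^ 2) / (∏ i ∈ Finset.range n, (l i) ^ 2) := by
      rw [hc, ← Finset.prod_pow, ← Finset.prod_div_distrib]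
      exact Finset.prod_congr rfl fun i _ => div_pow _ _ _
    rw [h1]
    exact hM ⟨n, rfl⟩
  set K : ℝ := Real.sqrt M with hKdef
  have hK0 : 0 ≤ K := Real.sqrt_nonneg M
  have hK : ∀ n, c n ≤ K := by
    intro n
    calc c n = Real.sqrt ((c n) ^ 2) := (Real.sqrt_sq (hcpos n).le).symm
      _ ≤ K := Real.sqrt_le_sqrt (hM' n)
  have hcrec : ∀ n, l n * c (n + 1) = ω n * c n := by
    intro n
    have : c (n + 1) = c n * (ω n / l n) := Finset.prod_range_succ _ n
    have hln : l n ≠ 0 := (hl n).ne'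
    rw [this]
    field_simp
  have ht : (0 : ℝ) < (2 : ℝ≥0∞).toReal := by norm_num
  -- membership of the multiplied sequence
  have hmem : ∀ f : lp (fun _ : ℕ => ℂ) 2, Memℓp (fun n => (c n : ℂ) * f n) 2 := by
    intro f
    apply memℓp_gen
    have hs := ((lp.memℓp f).summable ht).mul_left (K ^ (2 : ℝ≥0∞).toReal)
    refine Summable.of_nonneg_of_le (fun n => Real.rpow_nonneg (norm_nonneg _) _)
      (fun n => ?_) hs
    have hnorm : ‖(c n : ℂ) * f n‖ = c n * ‖f n‖ := by
      rw [norm_mul, Complex.norm_real, Real.norm_of_nonneg (hcpos n).le]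
    rw [hnorm, Real.mul_rpow (hcpos n).le (norm_nonneg _)]
    exact mul_le_mul_of_nonneg_right (Real.rpow_le_rpow (hcpos n).le (hK n) ht.le)
      (Real.rpow_nonneg (norm_nonneg _) _)
  -- the diagonal operator on ℓ²
  set Mlin : lp (fun _ : ℕ => ℂ) 2 →ₗ[ℂ] lp (fun _ : ℕ => ℂ) 2 :=
    { toFun := fun f => ⟨fun n => (c n : ℂ) * f n, hmem f⟩
      map_add' := fun f g => by
        refine lp.ext (funext fun n => ?_)
        simp only [lp.coeFn_add, Pi.add_apply]
        ring
      map_smul' := fun a f => by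
        refine lp.ext (funext fun n => ?_)
        simp only [lp.coeFn_smul, Pi.smul_apply, RingHom.id_apply, smul_eq_mul]
        ring } with hMlin
  have hMapp : ∀ (f : lp (fun _ : ℕ => ℂ) 2) (n : ℕ), (Mlin f) n = (c n : ℂ) * f n :=
    fun f n => rfl
  have hbound : ∀ f, ‖Mlin f‖ ≤ K * ‖f‖ := by
    intro f
    refine lp.norm_le_of_forall_sum_le ht (mul_nonneg hK0 (norm_nonneg f)) fun s => ?_
    have step : ∀ i ∈ s, ‖(Mlin f) i‖ ^ (2 : ℝ≥0∞).toReal ≤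
        K ^ (2 : ℝ≥0∞).toReal * ‖f i‖ ^ (2 : ℝ≥0∞).toReal := by
      intro i _
      rw [hMapp, norm_mul, Complex.norm_real, Real.norm_of_nonneg (hcpos i).le,
        Real.mul_rpow (hcpos i).le (norm_nonneg _)]
      exact mul_le_mul_of_nonneg_right (Real.rpow_le_rpow (hcpos i).le (hK i) ht.le)
        (Real.rpow_nonneg (norm_nonneg _) _)
    calc ∑ i ∈ s, ‖(Mlin f) i‖ ^ (2 : ℝ≥0∞).toReal
        ≤ ∑ i ∈ s, K ^ (2 : ℝ≥0∞).toReal * ‖f i‖ ^ (2 : ℝ≥0∞).toReal :=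
          Finset.sum_le_sum step
      _ = K ^ (2 : ℝ≥0∞).toReal * ∑ i ∈ s, ‖f i‖ ^ (2 : ℝ≥0∞).toReal := by
          rw [Finset.mul_sum]
      _ ≤ K ^ (2 : ℝ≥0∞).toReal * ‖f‖ ^ (2 : ℝ≥0∞).toReal :=
          mul_le_mul_of_nonneg_left (lp.sum_rpow_le_norm_rpow ht f s)
            (Real.rpow_nonneg hK0 _)
      _ = (K * ‖f‖) ^ (2 : ℝ≥0∞).toReal := (Real.mul_rpow hK0 (norm_nonneg _)).symm
  set Mc : lp (fun _ : ℕ => ℂ) 2 →L[ℂ] lp (fun _ : ℕ => ℂ) 2 :=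
    Mlin.mkContinuous K hbound with hMc
  have hMcapp : ∀ f, Mc f = Mlin f := fun f => rfl
  set X : H →L[ℂ] H :=
    (↑e.repr.symm.toContinuousLinearEquiv : lp (fun _ : ℕ => ℂ) 2 →L[ℂ] H) ∘L
      (Mc ∘L (↑e.repr.toContinuousLinearEquiv : H →L[ℂ] lp (fun _ : ℕ => ℂ) 2)) with hXdef
  have hXapp : ∀ x, X x = e.repr.symm (Mc (e.repr x)) := fun x => rfl
  have hsingle : ∀ n, Mc (lp.single 2 n (1 : ℂ)) = (c n : ℂ) • lp.single 2 n (1 : ℂ) := by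
    intro n
    refine lp.ext (funext fun j => ?_)
    rw [hMcapp, hMapp (lp.single 2 n (1 : ℂ)) j, lp.coeFn_smul, Pi.smul_apply, smul_eq_mul]
    by_cases hj : j = n
    · subst hj; rfl
    · rw [lp.single_apply_ne 2 n _ hj, mul_zero, mul_zero]
  have hXe : ∀ n, X (e n) = (c n : ℂ) • e n := by
    intro n
    rw [hXapp, e.repr_self, hsingle, map_smul]
    congr 1
    have := e.repr_self n
    exact (e.repr.symm_apply_eq.mpr this.symm)
  have hcne : ∀ n, ((c n : ℂ)) ≠ 0 := fun n => Complex.ofReal_ne_zero.mpr (hcpos n).ne'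
  refine ⟨X, ?_, ?_, ?_⟩
  · -- injective
    have hker : ∀ x, X x = 0 → x = 0 := by
      intro x hx
      rw [hXapp] at hx
      have h0 : Mc (e.repr x) = 0 := by
        apply e.repr.symm.injective
        rw [hx, map_zero]
      have hz : ∀ j, e.repr x j = 0 := by
        intro j
        have := congrFun (congrArg (Subtype.val) h0) j
        have h2 : (c j : ℂ) * e.repr x j = 0 := this
        exact (mul_eq_zero.mp h2).resolve_left (hcne j)
      apply e.repr.injective
      rw [map_zero]
      exact lp.ext (funext fun j => by simpa using hz j)
    intro a b hab
    have : X (a - b) = 0 := by rw [map_sub, hab, sub_self]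
    exact sub_eq_zero.mp (hker _ this)
  · -- dense range
    have hd : Dense (Submodule.span ℂ (Set.range (⇑e)) : Set H) := by
      have h := e.dense_span
      rw [Submodule.dense_iff_topologicalClosure_eq_top]
      exact h
    have hsub : (Submodule.span ℂ (Set.range (⇑e)) : Set H) ⊆ Set.range ⇑X := by
      have hle : Submodule.span ℂ (Set.range (⇑e)) ≤ LinearMap.range (X : H →ₗ[ℂ] H) := by
        rw [Submodule.span_le]
        rintro _ ⟨n, rfl⟩
        refine ⟨(c n : ℂ)⁻¹ • e n, ?_⟩
        show X ((c n : ℂ)⁻¹ • e n) = e n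
        rw [map_smul, hXe, smul_smul, inv_mul_cancel₀ (hcne n), one_smul]
      intro x hx
      exact hle hx
    exact hd.mono hsub
  · -- intertwining
    refine ContinuousLinearMap.ext_on (by
      have h := e.dense_span
      rw [Submodule.dense_iff_topologicalClosure_eq_top]
      exact h) ?_
    rintro _ ⟨n, rfl⟩
    simp only [ContinuousLinearMap.comp_apply, hWl, hWo, map_smul, hXe, smul_smul]
    congr 1
    push_cast
    exact_mod_cast congrArg (Complex.ofReal) ((hcrec n).trans (mul_comm _ _))
end
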